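/- arXiv:2011.11239 — 2 statements merged into one kernel-verified Lean document; each statement's English description precedes it below -/
import Mathlib

section
/- Let t1, t2 be integers such that t1 < -1 or t2 < 0. Then there exist real numbers u1 > 0 and u2 > 1 such that 2*(u1 + (t1 + 1))*(u2 + (t2 - 1)) - 2*t1*t2 + t1 - t2 = 0. -/
/-!
Substituting `a = u1 + t1 + 1` and `b = u2 + t2 - 1`, the claim asks for `a > t1 + 1` and
`b > t2` with `2ab = 2 t1 t2 - t1 + t2`. The hypothesis says exactly that one of the two lower
bounds `t1 + 1`, `t2` is negative, and once one factor may range over an interval around `0`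
while the other is arbitrarily large, the product attains every real value.
-/

section

variable {K : Type*} [Field K] [LinearOrder K] [IsStrictOrderedRing K]

theorem exists_lt_lt_mul_eq_of_left_neg {α : K} (hα : α < 0) (β c : K) :
    ∃ x y : K, α < x ∧ β < y ∧ x * y = c := by
  set y : K := |β| + |c / α| + 1
  have hy : 0 < y := by positivity
  have hcy : c / α < y := by linarith [le_abs_self (c / α), abs_nonneg β]
  refine ⟨c / y, y, ?_, by linarith [le_abs_self β, abs_nonneg (c / α)], div_mul_cancel₀ c hy.ne'⟩
  rw [lt_div_iff₀ hy, mul_comm]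
  exact (div_lt_iff_of_neg hα).mp hcy

theorem exists_lt_lt_mul_eq_of_neg_or_neg {α β : K} (h : α < 0 ∨ β < 0) (c : K) :
    ∃ x y : K, α < x ∧ β < y ∧ x * y = c := by
  rcases h with hα | hβ
  · exact exists_lt_lt_mul_eq_of_left_neg hα β c
  · obtain ⟨y, x, hy, hx, hyx⟩ := exists_lt_lt_mul_eq_of_left_neg hβ α c
    exact ⟨x, y, hx, hy, by rw [mul_comm, hyx]⟩

end

theorem stmt_3 (t1 t2 : ℤ) (ht : t1 < -1 ∨ t2 < 0) :
    ∃ u1 u2 : ℝ, 0 < u1 ∧ 1 < u2 ∧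
      2 * (u1 + ((t1 : ℝ) + 1)) * (u2 + ((t2 : ℝ) - 1)) - 2 * t1 * t2 + t1 - t2 = 0 := by
  have hneg : (t1 : ℝ) + 1 < 0 ∨ (t2 : ℝ) < 0 := by
    rcases ht with h | h
    · exact Or.inl (by exact_mod_cast (by omega : t1 + 1 < 0))
    · exact Or.inr (by exact_mod_cast h)
  obtain ⟨a, b, ha, hb, hab⟩ :=
    exists_lt_lt_mul_eq_of_neg_or_neg hneg ((2 * t1 * t2 - t1 + t2 : ℝ) / 2)
  refine ⟨a - (t1 + 1), b - t2 + 1, by linarith, by linarith, ?_⟩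
  linear_combination 2 * hab
end

section
/- Let k be an integer in {0,1} and t1, t2 integers such that t1 < 0 or t2 < 0. Then there exist real numbers u1, u2 with u2 > u1 > k such that u1^2 + 2*(u1 - (k - t1))*((u2 - u1) - (k - t2)) - (k - 2*t1)*(k - t2) = 0. -/
open Set in
lemma exists_root_aux (f : ℝ → ℝ) (hf : Continuous f) (x y : ℝ) (hxy : x < y)
    (h : f x < 0 ∧ 0 < f y ∨ f y < 0 ∧ 0 < f x) :
    ∃ z, x < z ∧ z < y ∧ f z = 0 := by
  rcases h with ⟨h1, h2⟩ | ⟨h1, h2⟩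
  · obtain ⟨z, hz, hz0⟩ := intermediate_value_Ioo (le_of_lt hxy) hf.continuousOn
      (show (0:ℝ) ∈ Ioo (f x) (f y) from ⟨h1, h2⟩)
    exact ⟨z, hz.1, hz.2, hz0⟩
  · obtain ⟨z, hz, hz0⟩ := intermediate_value_Ioo' (le_of_lt hxy) hf.continuousOn
      (show (0:ℝ) ∈ Ioo (f y) (f x) from ⟨h1, h2⟩)
    exact ⟨z, hz.1, hz.2, hz0⟩

lemma cont_aux (k t1 t2 u2 : ℝ) :
    Continuous (fun u1 : ℝ => u1 ^ 2 + 2 * (u1 - (k - t1)) * ((u2 - u1) - (k - t2))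
        - (k - 2 * t1) * (k - t2)) := by
  fun_prop

theorem stmt_4 (k t1 t2 : ℤ) (hk : k = 0 ∨ k = 1) (ht : t1 < 0 ∨ t2 < 0) :
    ∃ u1 u2 : ℝ, (k : ℝ) < u1 ∧ u1 < u2 ∧
      u1 ^ 2 + 2 * (u1 - ((k : ℝ) - t1)) * ((u2 - u1) - ((k : ℝ) - t2))
        - ((k : ℝ) - 2 * t1) * ((k : ℝ) - t2) = 0 := by
  have hk0 : (0:ℝ) ≤ (k:ℝ) := by rcases hk with h | h <;> simp [h]
  have hk1 : (k:ℝ) ≤ 1 := by rcases hk with h | h <;> simp [h]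
  set a : ℝ := (k:ℝ) - t2 with ha
  by_cases hcase : t1 < 0 ∨ (t1 = 0 ∧ k = 1)
  · -- big u2, f(k) < 0 < f(u2)
    set x : ℝ := (k:ℝ) * (t2 - 2*t1) with hx
    set u2 : ℝ := a^2 + ((k:ℝ)*a)^2 + x^2 + (k:ℝ) + 2 with hu2
    set f : ℝ → ℝ := fun u1 => u1 ^ 2 + 2 * (u1 - ((k : ℝ) - t1)) * ((u2 - u1) - ((k : ℝ) - t2))
        - ((k : ℝ) - 2 * t1) * ((k : ℝ) - t2) with hf
    have hfk : f (k:ℝ) = 2*(t1:ℝ)*u2 + x := by simp only [hf, hx]; ring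
    have hfu2 : f u2 = u2^2 - 2*a*u2 + (k:ℝ)*a := by simp only [hf, ha]; ring
    have hku2 : (k:ℝ) < u2 := by
      simp only [hu2]; nlinarith [sq_nonneg a, sq_nonneg ((k:ℝ)*a), sq_nonneg x]
    have hu2pos : 0 < u2 := lt_of_le_of_lt hk0 hku2
    have hpos : 0 < f u2 := by
      rw [hfu2]
      have h2a : 1 ≤ u2 - 2*a := by
        simp only [hu2]; nlinarith [sq_nonneg (a-1), sq_nonneg ((k:ℝ)*a), sq_nonneg x]
      nlinarith [sq_nonneg ((k:ℝ)*a + 1), sq_nonneg x, sq_nonneg a,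
        mul_le_mul_of_nonneg_left h2a (le_of_lt hu2pos)]
    have hneg : f (k:ℝ) < 0 := by
      rw [hfk]
      rcases hcase with h | ⟨h0, h1⟩
      · have ht1 : (t1:ℝ) ≤ -1 := by
          have : t1 ≤ -1 := by omega
          exact_mod_cast this
        have hu2x : x^2 + 2 ≤ u2 := by
          simp only [hu2]; nlinarith [sq_nonneg a, sq_nonneg ((k:ℝ)*a)]
        nlinarith [sq_nonneg (x - 1), sq_nonneg x]
      · have ht2i : t2 < 0 := by
          rcases ht with h | h
          · omega
          · exact h
        have ht2 : (t2:ℝ) ≤ -1 := by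
          have : t2 ≤ -1 := by omega
          exact_mod_cast this
        subst h0 h1
        simp only [hx]
        push_cast
        nlinarith
    obtain ⟨u1, h1, h2, h3⟩ := exists_root_aux f (by rw [hf]; exact cont_aux _ _ _ _)
      (k:ℝ) u2 hku2 (Or.inl ⟨hneg, hpos⟩)
    exact ⟨u1, u2, h1, h2, h3⟩
  · push_neg at hcase
    obtain ⟨hc1, hc2⟩ := hcase
    by_cases ht1' : t1 = 0
    · -- then k = 0, t2 < 0, explicit solution
      have hk0' : k = 0 := by
        rcases hk with h | h
        · exact h
        · exact absurd h (hc2 ht1')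
      have ht2 : t2 < 0 := by
        rcases ht with h | h
        · omega
        · exact h
      have ht2r : (t2:ℝ) ≤ -1 := by
        have : t2 ≤ -1 := by omega
        exact_mod_cast this
      subst hk0' ht1'
      refine ⟨-(t2:ℝ), -(3/2)*(t2:ℝ), by push_cast; linarith, by linarith, by push_cast; ring⟩
    · -- t1 ≥ 1, t2 < 0, u2 = a
      have ht1g : 1 ≤ t1 := by omega
      have ht2 : t2 < 0 := by
        rcases ht with h | h
        · omega
        · exact h
      have ht1r : (1:ℝ) ≤ (t1:ℝ) := by exact_mod_cast ht1g
      have ht2r : (t2:ℝ) ≤ -1 := by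
        have : t2 ≤ -1 := by omega
        exact_mod_cast this
      set f : ℝ → ℝ := fun u1 => u1 ^ 2 + 2 * (u1 - ((k : ℝ) - t1)) * ((a - u1) - ((k : ℝ) - t2))
          - ((k : ℝ) - 2 * t1) * ((k : ℝ) - t2) with hf
      have hfk : f (k:ℝ) = (t2:ℝ) * ((k:ℝ) - 2*t1) := by simp only [hf, ha]; ring
      have hfa : f a = a * (t2:ℝ) := by simp only [hf, ha]; ring
      have hka : (k:ℝ) < a := by rw [ha]; linarith
      have hapos : (1:ℝ) ≤ a := by rw [ha]; linarith
      have hpos : 0 < f (k:ℝ) := by rw [hfk]; nlinarith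
      have hneg : f a < 0 := by rw [hfa]; nlinarith
      obtain ⟨u1, h1, h2, h3⟩ := exists_root_aux f (by rw [hf]; exact cont_aux _ _ _ _)
        (k:ℝ) a hka (Or.inr ⟨hneg, hpos⟩)
      exact ⟨u1, a, h1, h2, h3⟩
end
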